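/- In the deterministic service model, for all r, t ∈ ℕ, every finite multiset M of deadlines, and all deadlines d, d' ∈ ℕ with d ≤ d', one has V(r, t, d' ::ₘ M) ≤ V(r, t, d ::ₘ M); that is, the state retaining the customer with the later deadline has value at most that of the state retaining the customer with the earlier deadline, so it is beneficial to serve the more urgent customer first. -/

import Mathlib

/-- Inconvenience function: `f η t d = η^(t-d+1)` if the deadline `d` is due
(`d ≤ t`), and `0` otherwise. -/
noncomputable def inconvenience (η : ℝ) (t d : ℕ) : ℝ :=
  if d ≤ t then η ^ (t - d + 1) else 0

/-- Value function of the deterministic service model: over `r` remaining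
periods, starting in period `t` with multiset `M` of customer deadlines and
per-period service capacity `m`, the minimal accumulated inconvenience.
`V η m 0 t M = 0` and
`V η m (r+1) t M = min over submultisets A ≤ M with card A ≤ m of
  [∑_{d ∈ M - A} f(t,d) + V η m r (t+1) (M - A)]`. -/
noncomputable def V (η : ℝ) (m : ℕ) : ℕ → ℕ → Multiset ℕ → ℝ
  | 0, _, _ => 0
  | r + 1, t, M =>
      ⨅ A : {A : Multiset ℕ // A ≤ M ∧ Multiset.card A ≤ m},
        (((M - A.1).map (inconvenience η t)).sum + V η m r (t + 1) (M - A.1))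

/-! Induct on the horizon `r`. Given an admissible service set `B` for the state `d ::ₘ M`,
either `B` serves the customer with deadline `d`, and then serving `d'` in its place from
`d' ::ₘ M` leads to the same post-decision state; or it does not, and then serving `B` from
`d' ::ₘ M` leads to `d' ::ₘ (M - B)` instead of `d ::ₘ (M - B)`, which costs no more now,
because the inconvenience is antitone in the deadline, and no more later, by induction. -/

noncomputable def postDecisionCost (η : ℝ) (m r t : ℕ) (N : Multiset ℕ) : ℝ :=
  (N.map (inconvenience η t)).sum + V η m r (t + 1) N

lemma inconvenience_nonneg {η : ℝ} (hη : 0 ≤ η) (t d : ℕ) : 0 ≤ inconvenience η t d := by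
  unfold inconvenience
  split_ifs
  · positivity
  · exact le_rfl

lemma inconvenience_antitone {η : ℝ} (hη : 1 ≤ η) (t : ℕ) : Antitone (inconvenience η t) := by
  intro d d' hdd'
  by_cases hd' : d' ≤ t
  · simp only [inconvenience, if_pos hd', if_pos (hdd'.trans hd')]
    exact pow_le_pow_right₀ hη (by omega)
  · simpa only [inconvenience, if_neg hd'] using inconvenience_nonneg (by linarith) t d

lemma sum_map_inconvenience_nonneg {η : ℝ} (hη : 0 ≤ η) (t : ℕ) (N : Multiset ℕ) :
    0 ≤ (N.map (inconvenience η t)).sum :=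
  Multiset.sum_nonneg (Multiset.forall_mem_map_iff.2 fun d _ => inconvenience_nonneg hη t d)

lemma le_V_succ {η x : ℝ} {m r t : ℕ} {M : Multiset ℕ}
    (h : ∀ A ≤ M, Multiset.card A ≤ m → x ≤ postDecisionCost η m r t (M - A)) :
    x ≤ V η m (r + 1) t M :=
  have : Nonempty {A : Multiset ℕ // A ≤ M ∧ Multiset.card A ≤ m} :=
    ⟨⟨0, Multiset.zero_le M, by simp⟩⟩
  le_ciInf fun A => h A.1 A.2.1 A.2.2

lemma V_nonneg {η : ℝ} (hη : 0 ≤ η) (m r t : ℕ) (M : Multiset ℕ) : 0 ≤ V η m r t M := by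
  induction r generalizing t M with
  | zero => exact le_rfl
  | succ r ih =>
    exact le_V_succ fun _ _ _ => add_nonneg (sum_map_inconvenience_nonneg hη t _) (ih _ _)

lemma postDecisionCost_nonneg {η : ℝ} (hη : 0 ≤ η) (m r t : ℕ) (N : Multiset ℕ) :
    0 ≤ postDecisionCost η m r t N :=
  add_nonneg (sum_map_inconvenience_nonneg hη t N) (V_nonneg hη m r (t + 1) N)

lemma V_succ_le {η : ℝ} (hη : 0 ≤ η) {m r t : ℕ} {M A : Multiset ℕ} (hAM : A ≤ M)
    (hA : Multiset.card A ≤ m) : V η m (r + 1) t M ≤ postDecisionCost η m r t (M - A) :=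
  ciInf_le_of_le ⟨0, by rintro _ ⟨A, rfl⟩; exact postDecisionCost_nonneg hη m r t _⟩
    ⟨A, hAM, hA⟩ le_rfl

lemma postDecisionCost_cons_le {η : ℝ} (hη : 1 ≤ η) {m r t d d' : ℕ} (hdd' : d ≤ d')
    {N : Multiset ℕ} (hV : V η m r (t + 1) (d' ::ₘ N) ≤ V η m r (t + 1) (d ::ₘ N)) :
    postDecisionCost η m r t (d' ::ₘ N) ≤ postDecisionCost η m r t (d ::ₘ N) := by
  simp only [postDecisionCost, Multiset.map_cons, Multiset.sum_cons]
  exact add_le_add (add_le_add_left (inconvenience_antitone hη t hdd') _) hV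

/-- Retaining the customer with the later deadline yields a value at most that
of retaining the customer with the earlier deadline: it is beneficial to serve
the more urgent customer first (Corollary 1). -/
theorem value_serve_urgent_first (η : ℝ) (hη : 1 < η) (m : ℕ)
    (r t : ℕ) (M : Multiset ℕ) (d d' : ℕ) (hdd' : d ≤ d') :
    V η m r t (d' ::ₘ M) ≤ V η m r t (d ::ₘ M) := by
  have hη₀ : 0 ≤ η := by linarith
  induction r generalizing t M with
  | zero => exact le_rfl
  | succ r ih =>
    refine le_V_succ fun B hB hBcard => ?_
    by_cases hdB : d ∈ B
    · have hswap : d' ::ₘ M - d' ::ₘ B.erase d = d ::ₘ M - B := by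
        conv_rhs => rw [← Multiset.cons_erase hdB]
        simp only [Multiset.sub_cons, Multiset.erase_cons_head]
      have hcard : Multiset.card (d' ::ₘ B.erase d) ≤ m := by
        rw [Multiset.card_cons, Multiset.card_erase_add_one hdB]
        exact hBcard
      rw [← hswap]
      exact V_succ_le hη₀
        ((Multiset.cons_le_cons_iff d').2 (Multiset.erase_le_iff_le_cons.2 hB)) hcard
    · have hBM : B ≤ M := (Multiset.le_cons_of_notMem hdB).1 hB
      calc V η m (r + 1) t (d' ::ₘ M)
          ≤ postDecisionCost η m r t (d' ::ₘ M - B) :=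
            V_succ_le hη₀ (hBM.trans (Multiset.le_cons_self M d')) hBcard
        _ ≤ postDecisionCost η m r t (d ::ₘ M - B) := by
          rw [Multiset.cons_sub_of_le _ hBM, Multiset.cons_sub_of_le _ hBM]
          exact postDecisionCost_cons_le hη.le hdd' (ih _ _)
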